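/- arXiv:math/0009021 — 4 statements merged into one kernel-verified Lean document; each statement's English description precedes it below -/
import Mathlib

section
/- Let G be a group-groupoid with identity object e, and let N(e) be a subgroup of the object group G(e) (under groupoid composition). Then for each object x, the set N(x) = { 1_x · n : n ∈ N(e) } is a subgroup of the object group G(x), and the family of these subgroups is a normal (and wide in the transitive components it meets) subgroupoid: for every arrow a : x → y, a ∘ N(y) ∘ a⁻¹ = N(x). -/
universe u v

structure GroupGroupoid where
  Obj : Type u
  Arr : Type v
  [objGroup : Group Obj]
  [arrGroup : Group Arr]
  src : Arr →* Obj
  tgt : Arr →* Obj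
  ident : Obj →* Arr
  comp : (a b : Arr) → tgt a = src b → Arr
  ginv : Arr → Arr
  src_ident : ∀ x, src (ident x) = x
  tgt_ident : ∀ x, tgt (ident x) = x
  src_comp : ∀ a b h, src (comp a b h) = src a
  tgt_comp : ∀ a b h, tgt (comp a b h) = tgt b
  ident_comp : ∀ (a : Arr) (h : tgt (ident (src a)) = src a), comp (ident (src a)) a h = a
  comp_ident : ∀ (a : Arr) (h : tgt a = src (ident (tgt a))), comp a (ident (tgt a)) h = a
  comp_assoc : ∀ (a b c : Arr) (h1 : tgt a = src b) (h2 : tgt (comp a b h1) = src c)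
    (h3 : tgt b = src c) (h4 : tgt a = src (comp b c h3)),
    comp (comp a b h1) c h2 = comp a (comp b c h3) h4
  src_ginv : ∀ a, src (ginv a) = tgt a
  tgt_ginv : ∀ a, tgt (ginv a) = src a
  comp_ginv : ∀ (a : Arr) (h : tgt a = src (ginv a)), comp a (ginv a) h = ident (src a)
  ginv_comp : ∀ (a : Arr) (h : tgt (ginv a) = src a), comp (ginv a) a h = ident (tgt a)
  comp_mul : ∀ (a b c d : Arr) (h1 : tgt a = src b) (h2 : tgt c = src d)
    (h3 : tgt (a * c) = src (b * d)), comp (a * c) (b * d) h3 = comp a b h1 * comp c d h2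

attribute [instance] GroupGroupoid.objGroup GroupGroupoid.arrGroup

theorem GroupGroupoid.comp_congr (G : GroupGroupoid) {a a' b b' : G.Arr}
    (ha : a = a') (hb : b = b') (h : G.tgt a = G.src b) (h' : G.tgt a' = G.src b') :
    G.comp a b h = G.comp a' b' h' := by subst ha; subst hb; rfl

theorem GroupGroupoid.one_comp (G : GroupGroupoid) (b : G.Arr) (hb : G.src b = 1)
    (h : G.tgt (1 : G.Arr) = G.src b) : G.comp 1 b h = b := by
  have hb' : (1 : G.Arr) = G.ident (G.src b) := by rw [hb, map_one]
  have h' : G.tgt (G.ident (G.src b)) = G.src b := G.tgt_ident _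
  rw [G.comp_congr hb' rfl h h', G.ident_comp b h']

theorem GroupGroupoid.comp_one (G : GroupGroupoid) (a : G.Arr) (ha : G.tgt a = 1)
    (h : G.tgt a = G.src (1 : G.Arr)) : G.comp a 1 h = a := by
  have ha' : (1 : G.Arr) = G.ident (G.tgt a) := by rw [ha, map_one]
  have h' : G.tgt a = G.src (G.ident (G.tgt a)) := (G.src_ident _).symm
  rw [G.comp_congr rfl ha' h h', G.comp_ident a h']

theorem GroupGroupoid.comp_eq (G : GroupGroupoid) (a b : G.Arr) (h : G.tgt a = G.src b) :
    G.comp a b h = a * (G.ident (G.tgt a))⁻¹ * b := by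
  set c : G.Arr := (G.ident (G.tgt a))⁻¹ * b with hc
  have hsc : G.src c = 1 := by
    rw [hc, map_mul, map_inv, G.src_ident, ← h, inv_mul_cancel]
  have h1 : G.tgt a = G.src (G.ident (G.tgt a)) := (G.src_ident _).symm
  have h2 : G.tgt (1 : G.Arr) = G.src c := by rw [map_one, hsc]
  have h3 : G.tgt (a * 1) = G.src (G.ident (G.tgt a) * c) := by
    rw [map_mul, map_mul, map_one, mul_one, G.src_ident, hsc, mul_one]
  calc G.comp a b h = G.comp (a * 1) (G.ident (G.tgt a) * c) h3 :=
        G.comp_congr (by rw [mul_one]) (by rw [hc, mul_inv_cancel_left]) h h3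
    _ = G.comp a (G.ident (G.tgt a)) h1 * G.comp 1 c h2 := G.comp_mul _ _ _ _ h1 h2 h3
    _ = a * c := by rw [G.comp_ident a h1, G.one_comp c hsc h2]
    _ = a * (G.ident (G.tgt a))⁻¹ * b := by rw [hc, mul_assoc]

theorem GroupGroupoid.ginv_eq (G : GroupGroupoid) (a : G.Arr) :
    G.ginv a = G.ident (G.tgt a) * a⁻¹ * G.ident (G.src a) := by
  have h : G.tgt a = G.src (G.ginv a) := (G.src_ginv a).symm
  have := G.comp_ginv a h
  rw [G.comp_eq a (G.ginv a) h] at this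
  have := congrArg (fun z => (a * (G.ident (G.tgt a))⁻¹)⁻¹ * z) this
  simpa [mul_assoc] using this

theorem normal_subgroupoid_of_subgroup (G : GroupGroupoid) (N : Set G.Arr)
    (hloop : ∀ n ∈ N, G.src n = 1 ∧ G.tgt n = 1)
    (hone : G.ident 1 ∈ N)
    (hcompN : ∀ m ∈ N, ∀ n ∈ N, ∀ h : G.tgt m = G.src n, G.comp m n h ∈ N)
    (hinvN : ∀ n ∈ N, G.ginv n ∈ N) :
    let Nx : G.Obj → Set G.Arr := fun x => (fun n => G.ident x * n) '' N
    (∀ x, ∀ m ∈ Nx x, G.src m = x ∧ G.tgt m = x) ∧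
    (∀ x, G.ident x ∈ Nx x) ∧
    (∀ x, ∀ m ∈ Nx x, ∀ n ∈ Nx x, ∀ h : G.tgt m = G.src n, G.comp m n h ∈ Nx x) ∧
    (∀ x, ∀ m ∈ Nx x, G.ginv m ∈ Nx x) ∧
    (∀ a : G.Arr, ∀ m ∈ Nx (G.tgt a), ∀ (h1 : G.tgt a = G.src m)
      (h2 : G.tgt (G.comp a m h1) = G.src (G.ginv a)),
      G.comp (G.comp a m h1) (G.ginv a) h2 ∈ Nx (G.src a)) := by
  intro Nx
  refine ⟨?_, ?_, ?_, ?_, ?_⟩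
  · rintro x m ⟨n, hn, rfl⟩
    obtain ⟨hs, ht⟩ := hloop n hn
    constructor
    · rw [map_mul, G.src_ident, hs, mul_one]
    · rw [map_mul, G.tgt_ident, ht, mul_one]
  · intro x
    exact ⟨G.ident 1, hone, by show G.ident x * G.ident 1 = G.ident x; rw [← map_mul, mul_one]⟩
  · rintro x _ ⟨m, hm, rfl⟩ _ ⟨n, hn, rfl⟩ h
    obtain ⟨hms, hmt⟩ := hloop m hm
    obtain ⟨hns, hnt⟩ := hloop n hn
    have hmn : G.tgt m = G.src n := by rw [hmt, hns]
    have hxx : G.tgt (G.ident x) = G.src (G.ident x) := by rw [G.tgt_ident, G.src_ident]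
    refine ⟨G.comp m n hmn, hcompN m hm n hn hmn, ?_⟩
    have hIxIx : G.comp (G.ident x) (G.ident x) hxx = G.ident x := by
      have h' : G.tgt (G.ident (G.src (G.ident x))) = G.src (G.ident x) := by
        rw [G.src_ident, G.tgt_ident]
      rw [G.comp_congr (show G.ident x = G.ident (G.src (G.ident x)) by rw [G.src_ident]) rfl
        hxx h', G.ident_comp (G.ident x) h']
    show G.ident x * G.comp m n hmn = _
    rw [G.comp_mul (G.ident x) (G.ident x) m n hxx hmn h, hIxIx]
  · rintro x _ ⟨n, hn, rfl⟩
    obtain ⟨hns, hnt⟩ := hloop n hn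
    refine ⟨G.ginv n, hinvN n hn, ?_⟩
    have e1 : G.ginv n = n⁻¹ := by
      rw [G.ginv_eq n, hns, hnt, map_one, one_mul, mul_one]
    have hsx : G.src (G.ident x * n) = x := by rw [map_mul, G.src_ident, hns, mul_one]
    have htx : G.tgt (G.ident x * n) = x := by rw [map_mul, G.tgt_ident, hnt, mul_one]
    show G.ident x * G.ginv n = G.ginv (G.ident x * n)
    rw [G.ginv_eq (G.ident x * n), hsx, htx, e1, mul_inv_rev]
    group
  · rintro a _ ⟨n, hn, rfl⟩ h1 h2
    obtain ⟨hns, hnt⟩ := hloop n hn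
    -- comp a (ident (tgt a) * n) h1 = a * n
    have hA : G.tgt a = G.src (G.ident (G.tgt a)) := (G.src_ident _).symm
    have hB : G.tgt (1 : G.Arr) = G.src n := by rw [map_one, hns]
    have h1' : G.tgt (a * 1) = G.src (G.ident (G.tgt a) * n) := by
      rw [map_mul, map_one, mul_one, map_mul, G.src_ident, hns, mul_one]
    have e1 : G.comp a (G.ident (G.tgt a) * n) h1 = a * n := by
      rw [G.comp_congr (show a = a * 1 by rw [mul_one]) rfl h1 h1',
        G.comp_mul a (G.ident (G.tgt a)) 1 n hA hB h1', G.comp_ident a hA, G.one_comp n hns hB]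
    have h2' : G.tgt (a * n) = G.src (G.ginv a) := by
      rw [map_mul, hnt, mul_one, G.src_ginv]
    have hC : G.tgt a = G.src (G.ginv a) := by rw [G.src_ginv]
    have hD : G.tgt n = G.src (1 : G.Arr) := by rw [map_one, hnt]
    have h2'' : G.tgt (a * n) = G.src (G.ginv a * 1) := by rw [mul_one]; exact h2'
    have e2 : G.comp (a * n) (G.ginv a) h2' = G.ident (G.src a) * n := by
      rw [G.comp_congr rfl (show G.ginv a = G.ginv a * 1 by rw [mul_one]) h2' h2'',
        G.comp_mul a (G.ginv a) n 1 hC hD h2'', G.comp_ginv a hC, G.comp_one n hnt hD]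
    refine ⟨n, hn, ?_⟩
    show G.ident (G.src a) * n = _
    rw [G.comp_congr e1 rfl h2 h2', e2]
end

section
/- Let G be a group-groupoid acting on a group A via a group homomorphism w : A → Ob(G), where the underlying groupoid action satisfies the interchange law (a∘g)(b∘h) = (ab)∘(gh) whenever both sides are defined. Then the action groupoid A ⋊ G, with group structure (a,g)(c,k) = (ac, gk) on arrows, is a group-groupoid, and the projection p : A ⋊ G → G is a morphism of group-groupoids that is a covering morphism of the underlying groupoids. -/
universe u v

universe w

/-- An action of a group-groupoid `G` on a group `A` via a group morphism
`w : A → Ob(G)`: a groupoid action on the underlying set satisfying the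
interchange law `(a ∘ g)(b ∘ k) = (ab) ∘ (gk)`. -/
structure GGAction (G : GroupGroupoid) where
  A : Type w
  [grpA : Group A]
  w : A →* G.Obj
  act : (a : A) → (g : G.Arr) → w a = G.src g → A
  w_act : ∀ a g h, w (act a g h) = G.tgt g
  act_ident : ∀ (a : A) (h : w a = G.src (G.ident (w a))), act a (G.ident (w a)) h = a
  act_comp : ∀ (a : A) (g g' : G.Arr) (h1 : G.tgt g = G.src g')
    (h2 : w a = G.src (G.comp g g' h1)) (h3 : w a = G.src g)
    (h4 : w (act a g h3) = G.src g'),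
    act a (G.comp g g' h1) h2 = act (act a g h3) g' h4
  interchange : ∀ (a b : A) (g k : G.Arr) (h1 : w a = G.src g) (h2 : w b = G.src k)
    (h3 : w (a * b) = G.src (g * k)),
    act (a * b) (g * k) h3 = act a g h1 * act b k h2

attribute [instance] GGAction.grpA

variable (G : GroupGroupoid) (α : GGAction G)

/-- Arrows of the action groupoid `A ⋊ G`. -/
def AGArr := {p : α.A × G.Arr // α.w p.1 = G.src p.2}

instance : Mul (AGArr G α) :=
  ⟨fun p q => ⟨(p.1.1 * q.1.1, p.1.2 * q.1.2), by rw [map_mul, map_mul, p.2, q.2]⟩⟩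
instance : One (AGArr G α) := ⟨⟨(1, 1), by rw [map_one, map_one]⟩⟩
instance : Inv (AGArr G α) :=
  ⟨fun p => ⟨(p.1.1⁻¹, p.1.2⁻¹), by rw [map_inv, map_inv, p.2]⟩⟩

/-- Source in the action groupoid. -/
def agsrc (p : AGArr G α) : α.A := p.1.1
/-- Target in the action groupoid: `(a, g) ↦ a ∘ g`. -/
def agtgt (p : AGArr G α) : α.A := α.act p.1.1 p.1.2 p.2
/-- Identities in the action groupoid. -/
def agident (a : α.A) : AGArr G α := ⟨(a, G.ident (α.w a)), (G.src_ident _).symm⟩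
/-- Composition in the action groupoid. -/
def agcomp (p q : AGArr G α) (h : agtgt G α p = agsrc G α q) : AGArr G α :=
  ⟨(p.1.1, G.comp p.1.2 q.1.2
      (by exact ((α.w_act p.1.1 p.1.2 p.2).symm.trans ((congrArg α.w h).trans q.2)))),
    by rw [G.src_comp]; exact p.2⟩
/-- Groupoid inversion in the action groupoid. -/
def agginv (p : AGArr G α) : AGArr G α :=
  ⟨(agtgt G α p, G.ginv p.1.2), by rw [G.src_ginv]; exact α.w_act _ _ _⟩

/-!
The arrows of `A ⋊ G` form the subgroup of `A × Arr(G)` on which `w ∘ fst` and `src ∘ snd`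
agree, so the group laws are inherited from the product. The target `(a, g) ↦ a ∘ g` is a
homomorphism precisely by the interchange law of the action, and every other group-groupoid
axiom holds componentwise, by the corresponding axiom of `G` or of the action. The projection
is a covering because an arrow out of `a` is the pair `(a, g)`, hence determined by `g`.
-/

namespace GroupGroupoid

variable {G}

theorem ident_comp_of_eq {x : G.Obj} (a : G.Arr) (hx : x = G.src a)
    (h : G.tgt (G.ident x) = G.src a) : G.comp (G.ident x) a h = a := by
  subst hx; exact G.ident_comp a h

theorem comp_ident_of_eq {x : G.Obj} (a : G.Arr) (hx : x = G.tgt a)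
    (h : G.tgt a = G.src (G.ident x)) : G.comp a (G.ident x) h = a := by
  subst hx; exact G.comp_ident a h

end GroupGroupoid

namespace GGAction

variable {G}

theorem act_congr {a a' : α.A} {g g' : G.Arr} (ha : a = a') (hg : g = g')
    (h : α.w a = G.src g) (h' : α.w a' = G.src g') :
    α.act a g h = α.act a' g' h' := by
  subst ha hg; rfl

theorem act_of_eq_ident (a : α.A) {g : G.Arr} (hg : g = G.ident (α.w a))
    (h : α.w a = G.src g) : α.act a g h = a := by
  subst hg; exact α.act_ident a h

theorem act_one (h : α.w 1 = G.src 1) : α.act 1 1 h = 1 :=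
  α.act_of_eq_ident 1 (by rw [map_one, map_one]) h

theorem act_act_ginv (a : α.A) (g : G.Arr) (h : α.w a = G.src g)
    (h' : α.w (α.act a g h) = G.src (G.ginv g)) :
    α.act (α.act a g h) (G.ginv g) h' = a := by
  rw [← α.act_comp a g (G.ginv g) (G.src_ginv g).symm (by rwa [G.src_comp]) h h']
  exact α.act_of_eq_ident a (by rw [G.comp_ginv, h]) _

end GGAction

def actionArrSubgroup : Subgroup (α.A × G.Arr) :=
  MonoidHom.eqLocus (α.w.comp (MonoidHom.fst _ _)) (G.src.comp (MonoidHom.snd _ _))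

namespace AGArr

variable {G α}

-- `AGArr G α` is the carrier of `actionArrSubgroup G α` once membership is unfolded.
@[reducible] def group : Group (AGArr G α) := inferInstanceAs (Group (actionArrSubgroup G α))

theorem ext {p q : AGArr G α} (h1 : p.1.1 = q.1.1) (h2 : p.1.2 = q.1.2) : p = q :=
  Subtype.ext (Prod.ext h1 h2)

theorem agtgt_mul (p q : AGArr G α) : agtgt G α (p * q) = agtgt G α p * agtgt G α q :=
  α.interchange _ _ _ _ p.2 q.2 _

theorem agtgt_one : agtgt G α 1 = 1 :=
  α.act_one _

theorem agident_mul (a b : α.A) : agident G α (a * b) = agident G α a * agident G α b :=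
  ext rfl ((congrArg G.ident (map_mul α.w a b)).trans (map_mul G.ident _ _))

theorem agtgt_agident (a : α.A) : agtgt G α (agident G α a) = a :=
  α.act_ident a _

theorem agtgt_agcomp (p q : AGArr G α) (h : agtgt G α p = agsrc G α q) :
    agtgt G α (agcomp G α p q h) = agtgt G α q :=
  (α.act_comp _ _ _ _ _ p.2 ((congrArg α.w h).trans q.2)).trans (α.act_congr h rfl _ _)

theorem agident_agcomp (p : AGArr G α)
    (h : agtgt G α (agident G α (agsrc G α p)) = agsrc G α p) :
    agcomp G α (agident G α (agsrc G α p)) p h = p :=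
  ext rfl (G.ident_comp_of_eq _ p.2 _)

theorem agcomp_agident (p : AGArr G α)
    (h : agtgt G α p = agsrc G α (agident G α (agtgt G α p))) :
    agcomp G α p (agident G α (agtgt G α p)) h = p :=
  ext rfl (G.comp_ident_of_eq _ (α.w_act _ _ p.2) _)

theorem agcomp_assoc (p q r : AGArr G α) (h1 : agtgt G α p = agsrc G α q)
    (h2 : agtgt G α (agcomp G α p q h1) = agsrc G α r) (h3 : agtgt G α q = agsrc G α r)
    (h4 : agtgt G α p = agsrc G α (agcomp G α q r h3)) :
    agcomp G α (agcomp G α p q h1) r h2 = agcomp G α p (agcomp G α q r h3) h4 :=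
  ext rfl (G.comp_assoc _ _ _ _ _ _ _)

theorem agtgt_agginv (p : AGArr G α) : agtgt G α (agginv G α p) = agsrc G α p :=
  α.act_act_ginv _ _ p.2 _

theorem agcomp_agginv (p : AGArr G α) (h : agtgt G α p = agsrc G α (agginv G α p)) :
    agcomp G α p (agginv G α p) h = agident G α (agsrc G α p) :=
  ext rfl ((G.comp_ginv _ _).trans (congrArg G.ident p.2.symm))

theorem agginv_agcomp (p : AGArr G α) (h : agtgt G α (agginv G α p) = agsrc G α p) :
    agcomp G α (agginv G α p) p h = agident G α (agtgt G α p) :=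
  ext rfl ((G.ginv_comp _ _).trans (congrArg G.ident (α.w_act _ _ p.2).symm))

theorem agcomp_mul (p q r s : AGArr G α) (h1 : agtgt G α p = agsrc G α q)
    (h2 : agtgt G α r = agsrc G α s) (h3 : agtgt G α (p * r) = agsrc G α (q * s)) :
    agcomp G α (p * r) (q * s) h3 = agcomp G α p q h1 * agcomp G α r s h2 :=
  ext rfl (G.comp_mul _ _ _ _ _ _ _)

/-- An arrow of `A ⋊ G` out of `a` is determined by its `G`-component. -/
def starEquiv (a : α.A) :
    {p : AGArr G α // agsrc G α p = a} ≃ {g : G.Arr // G.src g = α.w a} where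
  toFun p := ⟨p.1.1.2, p.1.2.symm.trans (congrArg α.w p.2)⟩
  invFun g := ⟨⟨(a, g.1), g.2.symm⟩, rfl⟩
  left_inv := by rintro ⟨p, rfl⟩; rfl
  right_inv _ := rfl

end AGArr

/-- For a group-groupoid `G` acting on a group `A`, the action groupoid `A ⋊ G`,
with group structure `(a,g)(c,k) = (ac, gk)`, is a group-groupoid, and the
projection `A ⋊ G → G` is a morphism of group-groupoids which is a covering
morphism of the underlying groupoids. -/
theorem action_group_groupoid_projection_is_covering :
    -- the arrows form a group
    (∀ p q r : AGArr G α, p * q * r = p * (q * r)) ∧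
    (∀ p : AGArr G α, 1 * p = p) ∧ (∀ p : AGArr G α, p * 1 = p) ∧
    (∀ p : AGArr G α, p⁻¹ * p = 1) ∧
    -- source, target and identity are group homomorphisms
    (∀ p q : AGArr G α, agsrc G α (p * q) = agsrc G α p * agsrc G α q) ∧
    (agsrc G α (1 : AGArr G α) = 1) ∧
    (∀ p q : AGArr G α, agtgt G α (p * q) = agtgt G α p * agtgt G α q) ∧
    (agtgt G α (1 : AGArr G α) = 1) ∧
    (∀ a b : α.A, agident G α (a * b) = agident G α a * agident G α b) ∧
    -- A ⋊ G is a groupoid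
    (∀ a : α.A, agsrc G α (agident G α a) = a) ∧
    (∀ a : α.A, agtgt G α (agident G α a) = a) ∧
    (∀ (p q : AGArr G α) (h : agtgt G α p = agsrc G α q),
      agsrc G α (agcomp G α p q h) = agsrc G α p) ∧
    (∀ (p q : AGArr G α) (h : agtgt G α p = agsrc G α q),
      agtgt G α (agcomp G α p q h) = agtgt G α q) ∧
    (∀ (p : AGArr G α) (h : agtgt G α (agident G α (agsrc G α p)) = agsrc G α p),
      agcomp G α (agident G α (agsrc G α p)) p h = p) ∧
    (∀ (p : AGArr G α) (h : agtgt G α p = agsrc G α (agident G α (agtgt G α p))),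
      agcomp G α p (agident G α (agtgt G α p)) h = p) ∧
    (∀ (p q r : AGArr G α) (h1 : agtgt G α p = agsrc G α q)
      (h2 : agtgt G α (agcomp G α p q h1) = agsrc G α r)
      (h3 : agtgt G α q = agsrc G α r)
      (h4 : agtgt G α p = agsrc G α (agcomp G α q r h3)),
      agcomp G α (agcomp G α p q h1) r h2 = agcomp G α p (agcomp G α q r h3) h4) ∧
    (∀ p : AGArr G α, agsrc G α (agginv G α p) = agtgt G α p) ∧
    (∀ p : AGArr G α, agtgt G α (agginv G α p) = agsrc G α p) ∧
    (∀ (p : AGArr G α) (h : agtgt G α p = agsrc G α (agginv G α p)),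
      agcomp G α p (agginv G α p) h = agident G α (agsrc G α p)) ∧
    (∀ (p : AGArr G α) (h : agtgt G α (agginv G α p) = agsrc G α p),
      agcomp G α (agginv G α p) p h = agident G α (agtgt G α p)) ∧
    -- interchange law: composition is a group homomorphism
    (∀ (p q r s : AGArr G α) (h1 : agtgt G α p = agsrc G α q)
      (h2 : agtgt G α r = agsrc G α s)
      (h3 : agtgt G α (p * r) = agsrc G α (q * s)),
      agcomp G α (p * r) (q * s) h3 = agcomp G α p q h1 * agcomp G α r s h2) ∧
    -- the projection is a morphism of group-groupoids over w
    (∀ p q : AGArr G α, (p * q).1.2 = p.1.2 * q.1.2) ∧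
    ((1 : AGArr G α).1.2 = 1) ∧
    (∀ p : AGArr G α, G.src p.1.2 = α.w (agsrc G α p)) ∧
    (∀ p : AGArr G α, G.tgt p.1.2 = α.w (agtgt G α p)) ∧
    (∀ a : α.A, (agident G α a).1.2 = G.ident (α.w a)) ∧
    (∀ (p q : AGArr G α) (h : agtgt G α p = agsrc G α q)
      (h' : G.tgt p.1.2 = G.src q.1.2),
      (agcomp G α p q h).1.2 = G.comp p.1.2 q.1.2 h') ∧
    -- and it is a covering morphism of the underlying groupoids
    (∀ a : α.A, Function.Bijective
      (fun p : {p : AGArr G α // agsrc G α p = a} =>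
        (⟨p.1.1.2, by rw [← p.1.2]; exact congrArg α.w p.2⟩ :
          {g : G.Arr // G.src g = α.w a}))) := by
  let := AGArr.group (G := G) (α := α)
  open AGArr in
  exact ⟨mul_assoc, one_mul, mul_one, inv_mul_cancel,
    fun _ _ => rfl, rfl, agtgt_mul, agtgt_one, agident_mul,
    fun _ => rfl, agtgt_agident, fun _ _ _ => rfl, agtgt_agcomp, agident_agcomp, agcomp_agident,
    agcomp_assoc, fun _ => rfl, agtgt_agginv, agcomp_agginv, agginv_agcomp,
    agcomp_mul,
    fun _ _ => rfl, rfl, fun p => p.2.symm, fun p => (α.w_act _ _ p.2).symm, fun _ => rfl,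
    fun _ _ _ _ => rfl,
    fun a => (starEquiv a).bijective⟩
end

section
/- Given a crossed module μ : M → P, define a groupoid β(M,P,μ) with object set P, arrow set the semidirect product P ⋉ M with multiplication (p,m)(q,n) = (pq, m^q n), source s(p,m) = p, target t(p,m) = p·(μ m), identities p ↦ (p,1), and composition (p,m) ∘ (p·μm, n) = (p, mn). Then β(M,P,μ) is a group-groupoid: it is a groupoid, and the group multiplication on arrows and on objects makes source, target, identity, and composition into group homomorphisms. -/
universe u v

/-- A crossed module `(M, P, μ)`: groups `M`, `P`, a homomorphism `μ : M → P`, and a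
right action of `P` on `M` by automorphisms (written `act p m` for `m ^ p`) with
CM1: `μ (m ^ p) = p⁻¹ * μ m * p` and CM2: `n ^ (μ m) = m⁻¹ * n * m`. -/
structure CrossedModule where
  M : Type u
  P : Type v
  [grpM : Group M]
  [grpP : Group P]
  μ : M →* P
  act : P → M →* M
  act_one : ∀ m, act 1 m = m
  act_mul : ∀ (p q : P) (m : M), act (p * q) m = act q (act p m)
  cm1 : ∀ (m : M) (p : P), μ (act p m) = p⁻¹ * μ m * p
  cm2 : ∀ m n : M, act (μ m) n = m⁻¹ * n * m

attribute [instance] CrossedModule.grpM CrossedModule.grpP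

/-- The arrows of the groupoid `β(M,P,μ)`: the underlying set of the semidirect
product `P ⋉ M`. -/
structure Sd (X : CrossedModule) where
  p : X.P
  m : X.M

namespace Sd

variable {X : CrossedModule}

instance : Mul (Sd X) := ⟨fun a b => ⟨a.p * b.p, X.act b.p a.m * b.m⟩⟩
instance : One (Sd X) := ⟨⟨1, 1⟩⟩
instance : Inv (Sd X) := ⟨fun a => ⟨a.p⁻¹, X.act a.p⁻¹ a.m⁻¹⟩⟩

/-- Source of an arrow. -/
def src (a : Sd X) : X.P := a.p
/-- Target of an arrow. -/
def tgt (a : Sd X) : X.P := a.p * X.μ a.m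
/-- Identity arrow at an object. -/
def ident (p : X.P) : Sd X := ⟨p, 1⟩
/-- Groupoid composition. -/
def comp (a b : Sd X) (_ : tgt a = src b) : Sd X := ⟨a.p, a.m * b.m⟩
/-- Groupoid inverse. -/
def ginv (a : Sd X) : Sd X := ⟨a.p * X.μ a.m, a.m⁻¹⟩

end Sd

/-- `β(M,P,μ)` is a group-groupoid: the arrows `P ⋉ M` form a group, the groupoid
axioms hold, and source, target, identity and composition are group homomorphisms
(the last one being the interchange law). -/
theorem beta_is_group_groupoid (X : CrossedModule) :
    -- group axioms on arrows
    (∀ a b c : Sd X, a * b * c = a * (b * c)) ∧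
    (∀ a : Sd X, 1 * a = a) ∧ (∀ a : Sd X, a * 1 = a) ∧
    (∀ a : Sd X, a⁻¹ * a = 1) ∧
    -- source, target and identity are group homomorphisms
    (∀ a b : Sd X, Sd.src (a * b) = Sd.src a * Sd.src b) ∧ (Sd.src (1 : Sd X) = 1) ∧
    (∀ a b : Sd X, Sd.tgt (a * b) = Sd.tgt a * Sd.tgt b) ∧ (Sd.tgt (1 : Sd X) = 1) ∧
    (∀ p q : X.P, (Sd.ident (p * q) : Sd X) = Sd.ident p * Sd.ident q) ∧
    ((Sd.ident (1 : X.P) : Sd X) = 1) ∧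
    -- groupoid axioms
    (∀ (a : Sd X), Sd.src (Sd.ident (Sd.src a)) = Sd.src a) ∧
    (∀ p : X.P, Sd.tgt (Sd.ident p : Sd X) = p) ∧
    (∀ (a b : Sd X) (h : Sd.tgt a = Sd.src b), Sd.src (Sd.comp a b h) = Sd.src a) ∧
    (∀ (a b : Sd X) (h : Sd.tgt a = Sd.src b), Sd.tgt (Sd.comp a b h) = Sd.tgt b) ∧
    (∀ (a : Sd X) (h : Sd.tgt (Sd.ident (Sd.src a)) = Sd.src a),
      Sd.comp (Sd.ident (Sd.src a)) a h = a) ∧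
    (∀ (a : Sd X) (h : Sd.tgt a = Sd.src (Sd.ident (Sd.tgt a))),
      Sd.comp a (Sd.ident (Sd.tgt a)) h = a) ∧
    (∀ (a b c : Sd X) (h1 : Sd.tgt a = Sd.src b) (h2 : Sd.tgt (Sd.comp a b h1) = Sd.src c)
      (h3 : Sd.tgt b = Sd.src c) (h4 : Sd.tgt a = Sd.src (Sd.comp b c h3)),
      Sd.comp (Sd.comp a b h1) c h2 = Sd.comp a (Sd.comp b c h3) h4) ∧
    (∀ a : Sd X, Sd.src (Sd.ginv a) = Sd.tgt a) ∧
    (∀ a : Sd X, Sd.tgt (Sd.ginv a) = Sd.src a) ∧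
    (∀ (a : Sd X) (h : Sd.tgt a = Sd.src (Sd.ginv a)),
      Sd.comp a (Sd.ginv a) h = Sd.ident (Sd.src a)) ∧
    (∀ (a : Sd X) (h : Sd.tgt (Sd.ginv a) = Sd.src a),
      Sd.comp (Sd.ginv a) a h = Sd.ident (Sd.tgt a)) ∧
    -- composition is a group homomorphism (interchange law)
    (∀ (a b c d : Sd X) (h1 : Sd.tgt a = Sd.src b) (h2 : Sd.tgt c = Sd.src d)
      (h3 : Sd.tgt (a * c) = Sd.src (b * d)),
      Sd.comp (a * c) (b * d) h3 = Sd.comp a b h1 * Sd.comp c d h2) := by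
  classical
  have hmul : ∀ a b : Sd X, a * b = ⟨a.p * b.p, X.act b.p a.m * b.m⟩ := fun _ _ => rfl
  have hone : (1 : Sd X) = ⟨1, 1⟩ := rfl
  have hinv : ∀ a : Sd X, a⁻¹ = ⟨a.p⁻¹, X.act a.p⁻¹ a.m⁻¹⟩ := fun _ => rfl
  refine ⟨?_, ?_, ?_, ?_, ?_, rfl, ?_, ?_, ?_, rfl, fun a => rfl, ?_, fun a b h => rfl,
    ?_, ?_, ?_, ?_, ?_, ?_, ?_, ?_, ?_⟩
  · intro a b c
    simp only [hmul, Sd.mk.injEq, mul_assoc, X.act_mul, map_mul]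
  · intro a
    simp only [hmul, hone, Sd.mk.injEq, one_mul, map_one]
  · intro a
    simp only [hmul, hone, Sd.mk.injEq, mul_one, X.act_one]
  · intro a
    simp only [hmul, hinv, hone, Sd.mk.injEq]
    constructor
    · exact inv_mul_cancel a.p
    · rw [← X.act_mul, inv_mul_cancel, X.act_one, inv_mul_cancel]
  · intro a b; rfl
  · intro a b
    simp only [hmul, Sd.tgt, X.cm1, map_mul]
    group
  · simp only [hone, Sd.tgt, map_one, mul_one]
  · intro p q
    simp only [Sd.ident, hmul, Sd.mk.injEq, map_one, mul_one, X.act_one]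
  · intro p; simp [Sd.tgt, Sd.ident]
  · intro a b h
    have h' : a.p * X.μ a.m = b.p := h
    simp only [Sd.comp, Sd.tgt, map_mul, ← mul_assoc, h']
  · intro a h
    simp only [Sd.comp, Sd.ident, Sd.src, one_mul]
  · intro a h
    simp only [Sd.comp, Sd.ident, mul_one]
  · intro a b c h1 h2 h3 h4
    simp only [Sd.comp, mul_assoc]
  · intro a; rfl
  · intro a; simp [Sd.ginv, Sd.tgt, Sd.src, mul_assoc]
  · intro a h
    simp [Sd.comp, Sd.ginv, Sd.ident, Sd.src]
  · intro a h
    simp [Sd.comp, Sd.ginv, Sd.ident, Sd.tgt]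
  · intro a b c d h1 h2 h3
    have hd : d.p = c.p * X.μ c.m := h2.symm
    simp only [Sd.comp, hmul, Sd.mk.injEq, map_mul]
    refine ⟨trivial, ?_⟩
    rw [hd, X.act_mul, X.cm2]
    group
end

section
/- Let μ : M → P be a crossed module with A = ker μ and Q = coker μ, and let φ : A → B be a morphism of Q-modules (B an abelian group with Q-action). Set M' = (B × M)/C where C = {(φ(a), i(a)⁻¹) : a ∈ A} (i : A → M the inclusion), with μ' : M' → P induced by (b,m) ↦ μ(m) and P acting on M' by (b,m)^p = (b^{[p]}, m^p). Then C is a normal subgroup of B × M, (M', P, μ') is a crossed module, ker μ' ≅ B, coker μ' ≅ Q, and φ' : M → M', m ↦ [(1, m)], together with the identity on P, is a morphism of crossed modules restricting to φ on kernels. -/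
universe u v

/-- The action of a crossed module preserves the kernel of its boundary. -/
lemma CrossedModule.act_ker (X : CrossedModule) (p : X.P) {a : X.M}
    (ha : a ∈ X.μ.ker) : X.act p a ∈ X.μ.ker := by
  rw [MonoidHom.mem_ker] at ha ⊢
  rw [X.cm1, ha]
  group

/-!
Since `A = ker μ` is central in `M` (by CM2), the pairs `(φ a, a⁻¹)` form a central, hence
normal, subgroup `C` of `B × M`. The diagonal action preserves `C` because `φ` is
`Q`-equivariant, and CM2 holds already in `B × M` because elements of `μ(M)` act trivially on
the `Q`-module `B`. A pair `(c, a)` with `a ∈ A` is congruent modulo `C` to `(c · φ a, 1)`,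
which identifies `ker μ'` with `B` and shows that `φ'` restricts to `φ`.
-/

theorem Subgroup.normal_of_le_center {G : Type*} [Group G] {H : Subgroup G}
    (hH : H ≤ Subgroup.center G) : H.Normal where
  conj_mem n hn g := by
    rw [Subgroup.mem_center_iff.mp (hH hn) g, mul_inv_cancel_right]
    exact hn

section PushoutRelations

variable {M B : Type*} [Group M] [CommGroup B] {A : Subgroup M}

def pushoutRelations (hA : A ≤ Subgroup.center M) (φ : A →* B) : Subgroup (B × M) where
  carrier := {x | ∃ a : A, x = (φ a, (a : M)⁻¹)}
  one_mem' := ⟨1, Prod.ext (map_one φ).symm (by simp)⟩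
  mul_mem' := by
    rintro _ _ ⟨a, rfl⟩ ⟨a', rfl⟩
    refine ⟨a * a', Prod.ext (map_mul φ a a').symm ?_⟩
    simp only [Prod.snd_mul, Subgroup.coe_mul, mul_inv_rev]
    exact Subgroup.mem_center_iff.mp (hA (A.inv_mem a'.2)) _
  inv_mem' := by
    rintro _ ⟨a, rfl⟩
    exact ⟨a⁻¹, by simp⟩

variable (hA : A ≤ Subgroup.center M) (φ : A →* B)

theorem mem_pushoutRelations {x : B × M} :
    x ∈ pushoutRelations hA φ ↔ ∃ a : A, x = (φ a, (a : M)⁻¹) :=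
  Iff.rfl

theorem mk_mem_pushoutRelations (a : A) : (φ a, (a : M)⁻¹) ∈ pushoutRelations hA φ :=
  (mem_pushoutRelations hA φ).mpr ⟨a, rfl⟩

theorem snd_mem_of_mem_pushoutRelations {x : B × M} (hx : x ∈ pushoutRelations hA φ) :
    x.2 ∈ A := by
  obtain ⟨a, rfl⟩ := (mem_pushoutRelations hA φ).mp hx
  exact A.inv_mem a.2

theorem pushoutRelations_le_center : pushoutRelations hA φ ≤ Subgroup.center (B × M) := by
  intro x hx
  obtain ⟨a, rfl⟩ := (mem_pushoutRelations hA φ).mp hx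
  rw [Subgroup.mem_center_iff]
  intro g
  have ha : g.2 * (a : M)⁻¹ = (a : M)⁻¹ * g.2 :=
    Subgroup.mem_center_iff.mp (hA (A.inv_mem a.2)) g.2
  exact Prod.ext (mul_comm _ _) ha

instance pushoutRelations_normal : (pushoutRelations hA φ).Normal :=
  Subgroup.normal_of_le_center (pushoutRelations_le_center hA φ)

theorem eq_one_of_mk_one_mem_pushoutRelations {b : B}
    (hb : ((b, 1) : B × M) ∈ pushoutRelations hA φ) : b = 1 := by
  obtain ⟨a, ha⟩ := (mem_pushoutRelations hA φ).mp hb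
  obtain rfl : a = 1 := Subtype.ext (inv_eq_one.mp (congrArg Prod.snd ha).symm)
  simpa using congrArg Prod.fst ha

theorem mk_mul_inv_mk_one_mem_pushoutRelations (c : B) (a : A) :
    ((c, (a : M)) : B × M) * (c * φ a, 1)⁻¹ ∈ pushoutRelations hA φ := by
  convert mk_mem_pushoutRelations hA φ a⁻¹ using 1
  simp [mul_comm]

theorem one_mk_inv_mul_mk_one_mem_pushoutRelations (a : A) :
    ((1 : B), (a : M))⁻¹ * (φ a, 1) ∈ pushoutRelations hA φ := by
  convert mk_mem_pushoutRelations hA φ a using 1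
  simp

theorem prodMap_mem_pushoutRelations (τ : B →* B) (σ : M →* M) (hσ : ∀ a ∈ A, σ a ∈ A)
    (hτσ : ∀ a : A, φ ⟨σ a, hσ a a.2⟩ = τ (φ a)) {x : B × M}
    (hx : x ∈ pushoutRelations hA φ) : (τ x.1, σ x.2) ∈ pushoutRelations hA φ := by
  obtain ⟨a, rfl⟩ := (mem_pushoutRelations hA φ).mp hx
  rw [mem_pushoutRelations]
  exact ⟨⟨σ a, hσ a a.2⟩, by rw [hτσ, map_inv]⟩

end PushoutRelations

namespace CrossedModule

variable (X : CrossedModule)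

theorem ker_le_center : X.μ.ker ≤ Subgroup.center X.M := by
  intro a ha
  rw [Subgroup.mem_center_iff]
  intro m
  have hm : m = a⁻¹ * m * a := by rw [← X.cm2, MonoidHom.mem_ker.mp ha, X.act_one]
  calc m * a = a * (a⁻¹ * m * a) := by group
    _ = a * m := by rw [← hm]

theorem mk_μ_eq_mk_one (m : X.M) :
    (QuotientGroup.mk (X.μ m) : X.P ⧸ X.μ.range) = QuotientGroup.mk 1 :=
  QuotientGroup.eq.mpr (by simp)

theorem prodAct_μ_eq_conj {B : Type*} [CommGroup B] (actB : X.P ⧸ X.μ.range → B →* B)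
    (actB_one : ∀ b : B, actB (QuotientGroup.mk 1) b = b) (x y : B × X.M) :
    ((actB (QuotientGroup.mk (X.μ x.2)) y.1, X.act (X.μ x.2) y.2) : B × X.M) =
      x⁻¹ * y * x := by
  refine Prod.ext ?_ (X.cm2 x.2 y.2)
  simp only [mk_μ_eq_mk_one, actB_one, Prod.fst_mul, Prod.fst_inv, mul_comm x.1⁻¹,
    inv_mul_cancel_right]

end CrossedModule

/-- Pushout of a crossed module along a morphism `φ : A → B` of `Q`-modules,
where `A = ker μ` and `Q = coker μ`.  With `C = {(φ a, a⁻¹) : a ∈ A} ⊆ B × M`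
and `M' = (B × M)/C`, with `μ'` induced by `(b, m) ↦ μ m` and the `P`-action by
`(b, m) ^ p = (b ^ [p], m ^ p)`:  `C` is a normal subgroup of `B × M`,
`(M', P, μ')` is a crossed module, `ker μ' ≅ B`, `coker μ' ≅ Q`, and
`φ' : m ↦ [(1, m)]` together with `id : P → P` is a morphism of crossed modules
restricting to `φ` on the kernels.  All statements about `M'` are expressed in
`B × M` modulo `C`. -/
theorem pushout_crossed_module (X : CrossedModule) (B : Type*) [CommGroup B]
    (actB : X.P ⧸ X.μ.range → B →* B)
    (actB_one : ∀ b : B, actB (QuotientGroup.mk 1) b = b)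
    (actB_mul : ∀ (p q : X.P) (b : B),
      actB (QuotientGroup.mk (p * q)) b =
        actB (QuotientGroup.mk q) (actB (QuotientGroup.mk p) b))
    (φ : X.μ.ker →* B)
    (hφ : ∀ (p : X.P) (a : X.μ.ker),
      φ ⟨X.act p a.1, X.act_ker p a.2⟩ = actB (QuotientGroup.mk p) (φ a)) :
    -- C = {(φ a, i(a)⁻¹) : a ∈ A}
    let C : Set (B × X.M) := {x | ∃ a : X.μ.ker, x = (φ a, (a : X.M)⁻¹)}
    -- the P-action on B × M
    let act' : X.P → B × X.M → B × X.M :=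
      fun p x => (actB (QuotientGroup.mk p) x.1, X.act p x.2)
    -- the boundary μ' on B × M
    let μ' : B × X.M → X.P := fun x => X.μ x.2
    -- C is a subgroup of B × M
    ((1 : B × X.M) ∈ C) ∧
    (∀ x ∈ C, ∀ y ∈ C, x * y ∈ C) ∧
    (∀ x ∈ C, x⁻¹ ∈ C) ∧
    -- C is normal
    (∀ x ∈ C, ∀ g : B × X.M, g * x * g⁻¹ ∈ C) ∧
    -- μ' descends to (B × M)/C
    (∀ x ∈ C, μ' x = 1) ∧
    -- the action act' descends to (B × M)/C and makes μ' a crossed module: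
    (∀ p : X.P, ∀ x ∈ C, act' p x ∈ C) ∧
    (∀ x : B × X.M, act' 1 x = x) ∧
    (∀ (p q : X.P) (x : B × X.M), act' (p * q) x = act' q (act' p x)) ∧
    (∀ (p : X.P) (x y : B × X.M), act' p (x * y) = act' p x * act' p y) ∧
    -- CM1 (on the nose)
    (∀ (p : X.P) (x : B × X.M), μ' (act' p x) = p⁻¹ * μ' x * p) ∧
    -- CM2 (modulo C)
    (∀ x y : B × X.M, (act' (μ' x) y)⁻¹ * (x⁻¹ * y * x) ∈ C) ∧
    -- ker μ' ≅ B via b ↦ [(b, 1)]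
    (∀ b : B, ((b, 1) : B × X.M) ∈ C → b = 1) ∧
    (∀ x : B × X.M, μ' x = 1 → ∃ b : B, x * ((b, (1 : X.M)) : B × X.M)⁻¹ ∈ C) ∧
    -- coker μ' ≅ Q = coker μ
    ({p : X.P | ∃ x : B × X.M, μ' x = p} = (X.μ.range : Set X.P)) ∧
    -- φ' : m ↦ [(1, m)] with id : P → P is a morphism of crossed modules
    (∀ m : X.M, μ' ((1 : B), m) = X.μ m) ∧
    (∀ m n : X.M, (((1 : B), m * n) : B × X.M) = ((1 : B), m) * ((1 : B), n)) ∧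
    (∀ (p : X.P) (m : X.M),
      (act' p ((1 : B), m))⁻¹ * ((1 : B), X.act p m) ∈ C) ∧
    -- which restricts to φ on the kernels
    (∀ a : X.μ.ker, (((1 : B), (a : X.M)) : B × X.M)⁻¹ * (φ a, (1 : X.M)) ∈ C) := by
  intro C act' μ'
  set R := pushoutRelations X.ker_le_center φ
  have act'_one_mk (p : X.P) (m : X.M) : act' p ((1 : B), m) = (1, X.act p m) :=
    Prod.ext (map_one _) rfl
  refine ⟨R.one_mem, fun _ hx _ hy => R.mul_mem hx hy, fun _ hx => R.inv_mem hx,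
    fun _ hx g => (pushoutRelations_normal X.ker_le_center φ).conj_mem _ hx g,
    fun _ hx => snd_mem_of_mem_pushoutRelations X.ker_le_center φ hx,
    fun p _ hx => prodMap_mem_pushoutRelations X.ker_le_center φ _ (X.act p)
      (fun _ => X.act_ker p) (hφ p) hx,
    fun x => Prod.ext (actB_one x.1) (X.act_one x.2),
    fun p q x => Prod.ext (actB_mul p q x.1) (X.act_mul p q x.2),
    fun p x y => Prod.ext (map_mul _ x.1 y.1) (map_mul _ x.2 y.2),
    fun p x => X.cm1 x.2 p, fun x y => ?_,
    fun _ hb => eq_one_of_mk_one_mem_pushoutRelations X.ker_le_center φ hb,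
    fun x hx => ⟨x.1 * φ ⟨x.2, hx⟩,
      mk_mul_inv_mk_one_mem_pushoutRelations X.ker_le_center φ x.1 ⟨x.2, hx⟩⟩,
    Set.ext fun p => ⟨fun ⟨x, hx⟩ => ⟨x.2, hx⟩, fun ⟨m, hm⟩ => ⟨(1, m), hm⟩⟩,
    fun m => rfl, fun m n => (Prod.one_mk_mul_one_mk m n).symm, fun p m => ?_,
    one_mk_inv_mul_mk_one_mem_pushoutRelations X.ker_le_center φ⟩
  · rw [show act' (μ' x) y = x⁻¹ * y * x from X.prodAct_μ_eq_conj actB actB_one x y,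
      inv_mul_cancel]
    exact R.one_mem
  · rw [act'_one_mk, inv_mul_cancel]
    exact R.one_mem
end
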